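/- Let (Ω, F, ℙ) be an atomless standard Borel probability space, let u : P₂(ℝ) → ℝ be bounded and measurable, and let ε > 0. For a square-integrable random variable X : Ω → ℝ, define v^ε(X) := inf over all Y ∈ L₂(Ω × [0,1], ℙ ⊗ Leb; ℝ) of [ u(law(Y)) + (1/(2ε))·((ℙ ⊗ Leb)({(ω,s) : X(ω) ≠ Y(ω,s)}))² ]. Then v^ε(X) depends only on the law of X: if X, X' ∈ L₂(Ω; ℝ) have the same distribution, then v^ε(X) = v^ε(X'). -/

import Mathlib

/-!
`v^ε(X)` is the infimum of a fixed function of the pair `(law Y, (ℙ ⊗ Leb)(X ≠ Y))` over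
`Y ∈ L²`, so it suffices that `X` and `X'` give rise to the same set of such pairs. Given `Y`,
disintegrate the joint law of `(X', Y)` as `law X' ⊗ κ` and write each `κ x` as the image of the
uniform law on `[0, 1]` under some `f x` (Kallenberg, Lemma 4.22). Since `X` has the law of `X'`,
`Z (ω, s) := f (X ω) s` makes `(X, Z)` distributed like `(X', Y)`; in particular `Z` has the law
of `Y`, is again in `L²`, and `(ℙ ⊗ Leb)(X ≠ Z) = (ℙ ⊗ Leb)(X' ≠ Y)`.
-/

open MeasureTheory

/-- The penalized infimum `v^ε(X)` from the inf-convolution approximation: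
`v^ε(X) = inf_{Y ∈ L₂(Ω×[0,1])} [ u(law Y) + (1/(2ε)) ((ℙ⊗Leb)(X ≠ Y))² ]`. -/
noncomputable def veps {Ω : Type*} [MeasurableSpace Ω] (P : Measure Ω)
    (u : Measure ℝ → ℝ) (ε : ℝ) (X : Ω → ℝ) : ℝ :=
  ⨅ Y : {Y : Ω × ℝ → ℝ // MemLp Y 2 (P.prod (volume.restrict (Set.Icc (0:ℝ) 1)))},
    u ((P.prod (volume.restrict (Set.Icc (0:ℝ) 1))).map Y.1) +
      (1 / (2 * ε)) *
        ((P.prod (volume.restrict (Set.Icc (0:ℝ) 1))) {p : Ω × ℝ | X p.1 ≠ Y.1 p}).toReal ^ 2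

open ProbabilityTheory Set Function unitInterval
open scoped ENNReal

section Randomization

variable {Ω S α β : Type*} [MeasurableSpace Ω] [MeasurableSpace S] [MeasurableSpace α]
  [MeasurableSpace β]

lemma MeasureTheory.Measure.map_prod_eq_compProd (ν : Measure α) [SFinite ν]
    (ρ : Measure S) [SFinite ρ] {f : α → S → β} (hf : Measurable (uncurry f))
    (κ : Kernel α β) [IsSFiniteKernel κ] (hfκ : ∀ a, ρ.map (f a) = κ a) :
    (ν.prod ρ).map (fun p ↦ (p.1, f p.1 p.2)) = ν ⊗ₘ κ := by
  have hgraph : Measurable (fun p : α × S ↦ (p.1, f p.1 p.2)) := measurable_fst.prodMk hf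
  ext t ht
  rw [Measure.map_apply hgraph ht, Measure.compProd_apply ht, Measure.prod_apply (hgraph ht)]
  refine lintegral_congr fun a ↦ ?_
  rw [← hfκ a, Measure.map_apply hf.of_uncurry_left (measurable_prodMk_left ht)]
  rfl

variable [StandardBorelSpace β] [Nonempty β]

theorem exists_identDistrib_prodMk (P : Measure Ω) [IsFiniteMeasure P] (ρ : Measure S)
    {U : S → I} (hU : Measurable U) (hUρ : ρ.map U = volume) {X X' : Ω → α}
    (hX : Measurable X) (hX' : Measurable X') (hlaw : P.map X = P.map X') {Y : Ω × S → β}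
    (hY : AEMeasurable Y (P.prod ρ)) :
    ∃ Z : Ω × S → β, Measurable Z ∧
      IdentDistrib (fun p ↦ (X p.1, Z p)) (fun p ↦ (X' p.1, Y p)) (P.prod ρ) (P.prod ρ) := by
  have : IsProbabilityMeasure (ρ.map U) := hUρ ▸ inferInstance
  have : IsProbabilityMeasure ρ := ρ.isProbabilityMeasure_of_map U
  have hpair : AEMeasurable (fun p : Ω × S ↦ (X' p.1, Y p)) (P.prod ρ) :=
    (hX'.comp measurable_fst).aemeasurable.prodMk hY
  set μ := (P.prod ρ).map (fun p ↦ (X' p.1, Y p))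
  have hμ_fst : μ.fst = P.map X := by
    rw [Measure.fst_map_prodMk₀ hY, hlaw,
      show (fun p : Ω × S ↦ X' p.1) = X' ∘ Prod.fst from rfl,
      ← Measure.map_map hX' measurable_fst, Measure.map_fst_prod, measure_univ, one_smul]
  obtain ⟨f, hf, hfκ⟩ := μ.condKernel.exists_measurable_map_eq_unitInterval
  have hZ : Measurable fun p : Ω × S ↦ f (X p.1) (U p.2) :=
    hf.comp ((hX.comp measurable_fst).prodMk (hU.comp measurable_snd))
  refine ⟨fun p ↦ f (X p.1) (U p.2), hZ, (hX.comp measurable_fst).prodMk hZ |>.aemeasurable,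
    hpair, ?_⟩
  have hXU : (P.prod ρ).map (Prod.map X U) = (P.map X).prod volume := by
    rw [← Measure.map_prod_map _ _ hX hU, hUρ]
  calc (P.prod ρ).map (fun p ↦ (X p.1, f (X p.1) (U p.2)))
      = ((P.prod ρ).map (Prod.map X U)).map (fun q ↦ (q.1, f q.1 q.2)) := by
        rw [Measure.map_map (g := fun q : α × I ↦ (q.1, f q.1 q.2)) (measurable_fst.prodMk hf)
          (hX.prodMap hU)]
        rfl
    _ = μ.fst ⊗ₘ μ.condKernel := by
        rw [hXU, Measure.map_prod_eq_compProd _ _ hf _ hfκ, hμ_fst]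
    _ = μ := μ.disintegrate μ.condKernel

end Randomization

section LawMismatch

variable {Ω S : Type*} [MeasurableSpace Ω] [MeasurableSpace S]

def lawMismatchPairs (Q : Measure (Ω × S)) (X : Ω → ℝ) : Set (Measure ℝ × ℝ≥0∞) :=
  range fun Y : {Y : Ω × S → ℝ // MemLp Y 2 Q} ↦ (Q.map Y.1, Q {p | X p.1 ≠ Y.1 p})

lemma lawMismatchPairs_subset (P : Measure Ω) [IsFiniteMeasure P] (ρ : Measure S)
    {U : S → I} (hU : Measurable U) (hUρ : ρ.map U = volume) {X X' : Ω → ℝ}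
    (hX : Measurable X) (hX' : Measurable X') (hlaw : P.map X = P.map X') :
    lawMismatchPairs (P.prod ρ) X' ⊆ lawMismatchPairs (P.prod ρ) X := by
  rintro _ ⟨⟨Y, hY⟩, rfl⟩
  obtain ⟨Z, -, hZ⟩ :=
    exists_identDistrib_prodMk P ρ hU hUρ hX hX' hlaw hY.aestronglyMeasurable.aemeasurable
  have hZY : IdentDistrib Z Y (P.prod ρ) (P.prod ρ) := hZ.comp measurable_snd
  exact ⟨⟨Z, hZY.memLp_iff.2 hY⟩,
    Prod.ext hZY.map_eq (hZ.measure_mem_eq measurableSet_diagonal.compl)⟩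

lemma lawMismatchPairs_eq (P : Measure Ω) [IsFiniteMeasure P] (ρ : Measure S)
    {U : S → I} (hU : Measurable U) (hUρ : ρ.map U = volume) {X X' : Ω → ℝ}
    (hX : Measurable X) (hX' : Measurable X') (hlaw : P.map X = P.map X') :
    lawMismatchPairs (P.prod ρ) X = lawMismatchPairs (P.prod ρ) X' :=
  (lawMismatchPairs_subset P ρ hU hUρ hX' hX hlaw.symm).antisymm
    (lawMismatchPairs_subset P ρ hU hUρ hX hX' hlaw)

end LawMismatch

lemma map_projIcc_volume_restrict :
    (volume.restrict (Icc (0 : ℝ) 1)).map (projIcc 0 1 zero_le_one) = (volume : Measure I) := by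
  rw [← measurePreserving_coe.map_eq,
    Measure.map_map continuous_projIcc.measurable measurable_subtype_coe]
  simp [comp_def, projIcc_val]

lemma iInf_comp_eq_of_range_eq {ι ι' γ δ : Type*} [InfSet δ] {g : ι → γ} {g' : ι' → γ}
    (F : γ → δ) (h : range g = range g') : ⨅ i, F (g i) = ⨅ j, F (g' j) := by
  simp only [iInf, range_comp' F g, range_comp' F g', h]

theorem stmt2_general {Ω : Type*} [MeasurableSpace Ω]
    (P : Measure Ω) [IsProbabilityMeasure P]
    (u : Measure ℝ → ℝ)
    (ε : ℝ)
    (X X' : Ω → ℝ) (hX : Measurable X) (hX' : Measurable X')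
    (hlaw : P.map X = P.map X') :
    veps P u ε X = veps P u ε X' :=
  iInf_comp_eq_of_range_eq (fun q : Measure ℝ × ℝ≥0∞ ↦ u q.1 + 1 / (2 * ε) * q.2.toReal ^ 2)
    (lawMismatchPairs_eq P _ continuous_projIcc.measurable map_projIcc_volume_restrict hX hX' hlaw)

theorem stmt2 {Ω : Type*} [MeasurableSpace Ω] [StandardBorelSpace Ω]
    (P : Measure Ω) [IsProbabilityMeasure P] [NullSingletonClass P]
    (u : Measure ℝ → ℝ) (hum : Measurable u) (hub : ∃ M, ∀ μ, |u μ| ≤ M)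
    (ε : ℝ) (hε : 0 < ε)
    (X X' : Ω → ℝ) (hX : Measurable X) (hX' : Measurable X')
    (hX2 : MemLp X 2 P) (hX'2 : MemLp X' 2 P)
    (hlaw : P.map X = P.map X') :
    veps P u ε X = veps P u ε X' :=
  stmt2_general P u ε X X' hX hX' hlaw
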